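/- arXiv:2402.16396 — 2 statements merged into one kernel-verified Lean document; each statement's English description precedes it below -/
import Mathlib

section
/- Let f : ℝ² → ℝ be defined by f(x) = √(log ‖x‖) if ‖x‖ ≥ 1 and f(x) = 0 otherwise. Then for any x, y ∈ ℝ² with x ≠ 0, f(x+y) − f(x) ≤ 1 + ‖y‖/‖x‖. -/
/-!
The function of the theorem is `√(log⁺ ‖·‖)`. Writing `‖x + y‖ = ‖x‖ · (‖x + y‖ / ‖x‖)`, its
increment is at most `√(log⁺ (‖x + y‖ / ‖x‖))`, because `log⁺` turns products into sums up to an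
inequality and `√` is subadditive. The ratio is at most `1 + ‖y‖ / ‖x‖`, and
`log⁺ (1 + t) ≤ t`, `√t ≤ 1 + t` finish the bound.
-/

open Real

lemma Real.sqrt_add_le_sqrt_add_sqrt {a b : ℝ} (ha : 0 ≤ a) (hb : 0 ≤ b) :
    √(a + b) ≤ √a + √b := by
  rw [sqrt_le_left (by positivity)]
  nlinarith [sq_sqrt ha, sq_sqrt hb, mul_nonneg (sqrt_nonneg a) (sqrt_nonneg b)]

lemma Real.sqrt_le_one_add {t : ℝ} (ht : 0 ≤ t) : √t ≤ 1 + t :=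
  (sqrt_le_left (by positivity)).2 (by nlinarith)

lemma Real.posLog_one_add_le {t : ℝ} (ht : 0 ≤ t) : log⁺ (1 + t) ≤ t := by
  rw [posLog_eq_log (by rw [abs_of_nonneg (by positivity)]; linarith)]
  linarith [log_le_sub_one_of_pos (show 0 < 1 + t by positivity)]

lemma Real.sqrt_posLog_mul_le (a b : ℝ) : √(log⁺ (a * b)) ≤ √(log⁺ a) + √(log⁺ b) :=
  (sqrt_le_sqrt posLog_mul).trans (sqrt_add_le_sqrt_add_sqrt posLog_nonneg posLog_nonneg)

lemma Real.sqrt_posLog_eq_ite {r : ℝ} (hr : 0 ≤ r) :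
    √(log⁺ r) = if 1 ≤ r then √(log r) else 0 := by
  split_ifs with h
  · rw [posLog_eq_log (by rwa [abs_of_nonneg hr])]
  · rw [(posLog_eq_zero_iff r).2 (by rw [abs_of_nonneg hr]; linarith), sqrt_zero]

lemma sqrt_posLog_norm_add_sub_le {E : Type*} [NormedAddCommGroup E] {x : E} (hx : x ≠ 0)
    (y : E) : √(log⁺ ‖x + y‖) - √(log⁺ ‖x‖) ≤ 1 + ‖y‖ / ‖x‖ := by
  have hx0 : 0 < ‖x‖ := norm_pos_iff.2 hx
  have hratio : ‖x + y‖ / ‖x‖ ≤ 1 + ‖y‖ / ‖x‖ := by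
    rw [one_add_div hx0.ne']
    gcongr
    exact norm_add_le x y
  have key : √(log⁺ ‖x + y‖) ≤ √(log⁺ ‖x‖) + (1 + ‖y‖ / ‖x‖) :=
    calc √(log⁺ ‖x + y‖) = √(log⁺ (‖x‖ * (‖x + y‖ / ‖x‖))) := by
          rw [mul_div_cancel₀ _ hx0.ne']
      _ ≤ √(log⁺ ‖x‖) + √(log⁺ (‖x + y‖ / ‖x‖)) := sqrt_posLog_mul_le _ _
      _ ≤ √(log⁺ ‖x‖) + √(log⁺ (1 + ‖y‖ / ‖x‖)) := by
          gcongr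
      _ ≤ √(log⁺ ‖x‖) + √(‖y‖ / ‖x‖) := by
          gcongr
          exact posLog_one_add_le (by positivity)
      _ ≤ √(log⁺ ‖x‖) + (1 + ‖y‖ / ‖x‖) := by
          gcongr
          exact sqrt_le_one_add (by positivity)
  linarith

theorem stmt1 (f : EuclideanSpace ℝ (Fin 2) → ℝ)
    (hf : ∀ x, f x = if 1 ≤ ‖x‖ then Real.sqrt (Real.log ‖x‖) else 0) :
    ∀ x y : EuclideanSpace ℝ (Fin 2), x ≠ 0 →
      f (x + y) - f x ≤ 1 + ‖y‖ / ‖x‖ := by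
  intro x y hx
  simpa only [hf, ← sqrt_posLog_eq_ite (norm_nonneg _)] using sqrt_posLog_norm_add_sub_le hx y
end

section
/- Let S be a step-reinforced random walk in ℝ^d with parameter α and step distribution μ satisfying E‖X₁‖ < ∞, and let h be μ-integrable. Define γₙ = (1−α)/(n+1) and βₙ = ∏_{k=1}^{n−1}(1−γₖ) with β₁ = 1. Then for all n > k ≥ 1, E(Δₙ(h) | 𝓕ₖ) = (βₙ/βₖ) Δₖ(h), where Δₙ(h) = (1/n)Σ_{i=1}^n h(Xᵢ) − Eh(X₁). -/
open MeasureTheory ProbabilityTheory Filter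
open scoped ENNReal Topology
set_option linter.unusedSectionVars false
set_option linter.unusedVariables false

noncomputable section

/-- The natural filtration generated by the steps `X 1, …, X n`. -/
def srrwFiltration {Ω E : Type*} [MeasurableSpace Ω] [MeasurableSpace E]
    (X : ℕ → Ω → E) (n : ℕ) : MeasurableSpace Ω :=
  ⨆ i ∈ Finset.Icc 1 n, MeasurableSpace.comap (X i) inferInstance

/-- A step-reinforced random walk with reinforcement parameter `α` and step
distribution `μ`: `X 1 ∼ μ`, and given the first `n` steps, the conditional law of
`X (n+1)` is `α · (empirical measure of X 1, …, X n) + (1-α) · μ`. -/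
structure IsSRRW {Ω E : Type*} [MeasurableSpace Ω] [MeasurableSpace E]
    (P : Measure Ω) (α : ℝ) (μ : Measure E) (X : ℕ → Ω → E) : Prop where
  probP : IsProbabilityMeasure P
  probμ : IsProbabilityMeasure μ
  alpha_nonneg : 0 ≤ α
  alpha_lt_one : α < 1
  meas : ∀ n, Measurable (X n)
  law_one : P.map (X 1) = μ
  cond : ∀ n : ℕ, 1 ≤ n → ∀ A : Set E, MeasurableSet A →
    (P[(fun ω => A.indicator (fun _ => (1:ℝ)) (X (n+1) ω)) | srrwFiltration X n])
      =ᵐ[P] fun ω =>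
        (α / n) * ∑ i ∈ Finset.Icc 1 n, A.indicator (fun _ => (1:ℝ)) (X i ω)
        + (1 - α) * (μ A).toReal

/-- Position of the walk: `S n = X 1 + ⋯ + X n`, `S 0 = 0`. -/
def srrwSum {Ω E : Type*} [AddCommMonoid E] (X : ℕ → Ω → E) (n : ℕ) (ω : Ω) : E :=
  ∑ i ∈ Finset.Icc 1 n, X i ω


section Aux

variable {Ω E : Type*} [MeasurableSpace Ω] [MeasurableSpace E] {X : ℕ → Ω → E}

theorem srrwFiltration_le (hX : ∀ n, Measurable (X n)) (n : ℕ) :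
    srrwFiltration X n ≤ ‹MeasurableSpace Ω› := by
  apply iSup₂_le
  intro i _
  exact (hX i).comap_le

theorem srrwFiltration_mono {k n : ℕ} (hkn : k ≤ n) :
    srrwFiltration X k ≤ srrwFiltration X n := by
  apply biSup_mono
  intro i hi
  simp only [Finset.mem_Icc] at hi ⊢
  exact ⟨hi.1, hi.2.trans hkn⟩

theorem measurable_X_filtration {i n : ℕ} (hin : i ∈ Finset.Icc 1 n) :
    Measurable[srrwFiltration X n] (X i) := by
  rw [measurable_iff_comap_le]
  exact le_iSup₂ (f := fun i (_ : i ∈ Finset.Icc 1 n) =>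
    MeasurableSpace.comap (X i) inferInstance) i hin

variable {P : Measure Ω} {α : ℝ} {μ : Measure E}

theorem indicator_comp (A : Set E) (f : Ω → E) (ω : Ω) :
    A.indicator (fun _ => (1:ℝ)) (f ω) = (f ⁻¹' A).indicator (fun _ => (1:ℝ)) ω := by
  by_cases hw : f ω ∈ A <;> simp [Set.indicator, hw]

theorem srrw_map_restrict (hs : IsSRRW P α μ X) {n : ℕ} (hn : 1 ≤ n)
    {s : Set Ω} (hsm : MeasurableSet[srrwFiltration X n] s) :
    (P.restrict s).map (X (n+1)) =
      (∑ i ∈ Finset.Icc 1 n, ENNReal.ofReal (α / n) • (P.restrict s).map (X i))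
      + (ENNReal.ofReal (1 - α) * P s) • μ := by
  haveI := hs.probP
  haveI := hs.probμ
  have hle := srrwFiltration_le hs.meas n
  have hsm' : MeasurableSet s := hle s hsm
  have hα : 0 ≤ α / n := div_nonneg hs.alpha_nonneg (Nat.cast_nonneg n)
  have hα' : 0 ≤ 1 - α := le_of_lt (sub_pos.mpr hs.alpha_lt_one)
  ext A hA
  -- the conditional expectation identity, integrated over s
  have hcond := hs.cond n hn A hA
  have hintf : Integrable (fun ω => A.indicator (fun _ => (1:ℝ)) (X (n+1) ω)) P := by
    simp only [indicator_comp A (X (n+1))]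
    exact (integrable_const (1:ℝ)).indicator (hs.meas (n+1) hA)
  have hset : ∫ ω in s,
        ((α / n) * ∑ i ∈ Finset.Icc 1 n, A.indicator (fun _ => (1:ℝ)) (X i ω)
        + (1 - α) * (μ A).toReal) ∂P
      = ∫ ω in s, A.indicator (fun _ => (1:ℝ)) (X (n+1) ω) ∂P := by
    rw [← setIntegral_condExp hle hintf hsm]
    exact (setIntegral_congr_ae hsm' (hcond.mono fun ω hω _ => hω)).symm
  -- compute both sides
  have hind : ∀ i : ℕ, ∫ ω in s, A.indicator (fun _ => (1:ℝ)) (X i ω) ∂P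
      = (P (X i ⁻¹' A ∩ s)).toReal := by
    intro i
    simp only [indicator_comp A (X i)]
    rw [integral_indicator (hs.meas i hA), Measure.restrict_restrict (hs.meas i hA),
      setIntegral_const, smul_eq_mul, mul_one, measureReal_def]
  have hindint : ∀ i : ℕ, Integrable (fun ω => A.indicator (fun _ => (1:ℝ)) (X i ω))
      (P.restrict s) := by
    intro i
    simp only [indicator_comp A (X i)]
    exact ((integrable_const (1:ℝ)).indicator (hs.meas i hA)).restrict
  rw [integral_add ((integrable_finset_sum _ fun i _ => hindint i).const_mul _)
      (integrable_const _), integral_const_mul, integral_finset_sum _ (fun i _ => hindint i),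
    setIntegral_const, measureReal_def, hind (n+1)] at hset
  simp only [hind] at hset
  -- now hset is the real-valued identity; transfer to ℝ≥0∞
  rw [Measure.map_apply (hs.meas (n+1)) hA, Measure.restrict_apply (hs.meas (n+1) hA)]
  have hmapi : ∀ i : ℕ, ((P.restrict s).map (X i)) A = P (X i ⁻¹' A ∩ s) := by
    intro i
    rw [Measure.map_apply (hs.meas i) hA, Measure.restrict_apply (hs.meas i hA)]
  have happly : ((∑ i ∈ Finset.Icc 1 n, ENNReal.ofReal (α / n) • (P.restrict s).map (X i))
        + (ENNReal.ofReal (1 - α) * P s) • μ) A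
      = (∑ i ∈ Finset.Icc 1 n, ENNReal.ofReal (α / n) * P (X i ⁻¹' A ∩ s))
        + (ENNReal.ofReal (1 - α) * P s) * μ A := by
    rw [Measure.add_apply, Measure.finset_sum_apply, Measure.smul_apply, smul_eq_mul]
    congr 1
    refine Finset.sum_congr rfl fun i _ => ?_
    rw [Measure.smul_apply, smul_eq_mul, hmapi]
  have hne1 : (∑ i ∈ Finset.Icc 1 n, ENNReal.ofReal (α / n) * P (X i ⁻¹' A ∩ s)) ≠ ∞ :=
    (ENNReal.sum_lt_top.mpr fun i _ =>
      ENNReal.mul_lt_top ENNReal.ofReal_lt_top (measure_lt_top _ _)).ne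
  have hne2 : (ENNReal.ofReal (1 - α) * P s) * μ A ≠ ∞ :=
    (ENNReal.mul_lt_top (ENNReal.mul_lt_top ENNReal.ofReal_lt_top (measure_lt_top _ _))
      (measure_lt_top _ _)).ne
  rw [happly, ← ENNReal.toReal_eq_toReal_iff' (measure_ne_top _ _) (by
    exact ENNReal.add_ne_top.mpr ⟨hne1, hne2⟩),
    ENNReal.toReal_add hne1 hne2,
    ENNReal.toReal_sum (fun i _ =>
      (ENNReal.mul_lt_top ENNReal.ofReal_lt_top (measure_lt_top _ _)).ne)]
  simp only [ENNReal.toReal_mul, ENNReal.toReal_ofReal hα, ENNReal.toReal_ofReal hα']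
  rw [← hset, smul_eq_mul, Finset.mul_sum]
  ring

theorem srrw_law (hs : IsSRRW P α μ X) : ∀ i, 1 ≤ i → P.map (X i) = μ := by
  haveI := hs.probP
  haveI := hs.probμ
  have key : ∀ n, ∀ j, 1 ≤ j → j ≤ n → P.map (X j) = μ := by
    intro n
    induction n with
    | zero => intro j h1 h2; omega
    | succ n ih =>
      intro j h1 h2
      rcases Nat.lt_or_ge j (n+1) with hj | hj
      · exact ih j h1 (by omega)
      have hjn : j = n + 1 := by omega
      subst hjn
      rcases Nat.eq_zero_or_pos n with h0 | hn
      · subst h0; exact hs.law_one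
      have hmap := srrw_map_restrict hs hn (s := Set.univ) MeasurableSet.univ
      rw [Measure.restrict_univ] at hmap
      rw [hmap]
      have hsum : (∑ i ∈ Finset.Icc 1 n, ENNReal.ofReal (α / n) • P.map (X i))
          = ∑ i ∈ Finset.Icc 1 n, ENNReal.ofReal (α / n) • μ :=
        Finset.sum_congr rfl fun i hi => by
          rw [ih i (Finset.mem_Icc.mp hi).1 (Finset.mem_Icc.mp hi).2]
      rw [hsum, Finset.sum_const, Nat.card_Icc, Nat.add_sub_cancel, measure_univ, mul_one]
      have hn0 : (n : ℝ) ≠ 0 := Nat.cast_ne_zero.mpr (by omega)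
      have hco : (n : ℝ≥0∞) * ENNReal.ofReal (α / n) + ENNReal.ofReal (1 - α) = 1 := by
        rw [show ((n : ℝ≥0∞)) = ENNReal.ofReal (n : ℝ) from (ENNReal.ofReal_natCast n).symm,
          ← ENNReal.ofReal_mul (Nat.cast_nonneg n),
          ← ENNReal.ofReal_add
            (mul_nonneg (Nat.cast_nonneg n) (div_nonneg hs.alpha_nonneg (Nat.cast_nonneg n)))
            (le_of_lt (sub_pos.mpr hs.alpha_lt_one))]
        have : (n : ℝ) * (α / n) + (1 - α) = 1 := by field_simp; ring
        rw [this, ENNReal.ofReal_one]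
      ext A hA
      simp only [Measure.add_apply, Measure.smul_apply, smul_eq_mul, nsmul_eq_mul]
      rw [← mul_assoc, ← add_mul, hco, one_mul]
  intro i hi
  exact key i i hi le_rfl

theorem srrw_integrable_comp (hs : IsSRRW P α μ X) {g : E → ℝ}
    (hgm : StronglyMeasurable g) (hgi : Integrable g μ) {i : ℕ} (hi : 1 ≤ i) :
    Integrable (fun ω => g (X i ω)) P := by
  have h1 : Integrable (g ∘ X i) P :=
    (integrable_map_measure (μ := P) hgm.aestronglyMeasurable
      (hs.meas i).aemeasurable).mp (by rw [srrw_law hs i hi]; exact hgi)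
  exact h1

theorem srrw_condexp_comp (hs : IsSRRW P α μ X) {g : E → ℝ}
    (hgm : StronglyMeasurable g) (hgi : Integrable g μ) {n : ℕ} (hn : 1 ≤ n) :
    P[(fun ω => g (X (n+1) ω)) | srrwFiltration X n]
      =ᵐ[P] fun ω => (α / n) * ∑ i ∈ Finset.Icc 1 n, g (X i ω)
        + (1 - α) * ∫ x, g x ∂μ := by
  haveI := hs.probP
  haveI := hs.probμ
  have hle := srrwFiltration_le hs.meas n
  have hcomp : ∀ i ∈ Finset.Icc 1 n, Integrable (fun ω => g (X i ω)) P := fun i hi =>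
    srrw_integrable_comp hs hgm hgi (Finset.mem_Icc.mp hi).1
  have hRHSint : Integrable (fun ω => (α / n) * ∑ i ∈ Finset.Icc 1 n, g (X i ω)
      + (1 - α) * ∫ x, g x ∂μ) P :=
    ((integrable_finset_sum _ hcomp).const_mul _).add (integrable_const _)
  refine (ae_eq_condExp_of_forall_setIntegral_eq hle
    (srrw_integrable_comp hs hgm hgi (by omega : 1 ≤ n + 1))
    (fun s _ _ => hRHSint.integrableOn) (fun s hsm _ => ?_) ?_).symm
  · -- set integral equality
    have hsm' : MeasurableSet s := hle s hsm
    have hmapint : ∀ i ∈ Finset.Icc 1 n, Integrable g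
        (ENNReal.ofReal (α / n) • (P.restrict s).map (X i)) := by
      intro i hi
      refine (Integrable.mono_measure ?_
        (Measure.map_mono Measure.restrict_le_self (hs.meas i))).smul_measure
        ENNReal.ofReal_ne_top
      rw [srrw_law hs i (Finset.mem_Icc.mp hi).1]
      exact hgi
    have hmeq := srrw_map_restrict hs hn hsm
    have hXint : ∫ ω in s, g (X (n+1) ω) ∂P
        = ∑ i ∈ Finset.Icc 1 n, (α / n) * ∫ ω in s, g (X i ω) ∂P
          + ((1 - α) * (P s).toReal) * ∫ x, g x ∂μ := by
      rw [← integral_map (hs.meas (n+1)).aemeasurable hgm.aestronglyMeasurable, hmeq,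
        integral_add_measure (integrable_finset_sum_measure.mpr hmapint)
          ((hgi.smul_measure (ENNReal.mul_ne_top ENNReal.ofReal_ne_top (measure_ne_top _ _)))),
        integral_finset_sum_measure hmapint, integral_smul_measure]
      congr 1
      · refine Finset.sum_congr rfl fun i hi => ?_
        rw [integral_smul_measure,
          integral_map (hs.meas i).aemeasurable hgm.aestronglyMeasurable,
          ENNReal.toReal_ofReal (div_nonneg hs.alpha_nonneg (Nat.cast_nonneg n)), smul_eq_mul]
      · rw [ENNReal.toReal_mul, ENNReal.toReal_ofReal
          (le_of_lt (sub_pos.mpr hs.alpha_lt_one)), smul_eq_mul]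
    rw [integral_add (((integrable_finset_sum _ hcomp).const_mul _).integrableOn)
      (integrable_const _).integrableOn, integral_const_mul,
      integral_finset_sum _ (fun i hi => (hcomp i hi).integrableOn), setIntegral_const,
      hXint, Finset.mul_sum]
    simp only [smul_eq_mul, measureReal_def]
    ring
  · -- measurability
    refine StronglyMeasurable.aestronglyMeasurable ?_
    apply Measurable.stronglyMeasurable
    apply Measurable.add_const
    apply Measurable.const_mul
    exact Finset.measurable_sum _ fun i hi =>
      hgm.measurable.comp (measurable_X_filtration hi)

theorem condexp_const_mul' {Ω' : Type*} {m m0 : MeasurableSpace Ω'} {P : Measure Ω'}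
    (c : ℝ) (f : Ω' → ℝ) :
    P[(fun ω => c * f ω)|m] =ᵐ[P] fun ω => c * (P[f|m]) ω :=
  condExp_smul (μ := P) (m := m) c f

theorem srrw_condexp_delta (hs : IsSRRW P α μ X) {g : E → ℝ}
    (hgm : StronglyMeasurable g) (hgi : Integrable g μ) {n : ℕ} (hn : 1 ≤ n) :
    P[(fun ω => (1 / ((n:ℝ)+1)) * ∑ i ∈ Finset.Icc 1 (n+1), g (X i ω) - ∫ x, g x ∂μ)
        | srrwFiltration X n]
      =ᵐ[P] fun ω => (1 - (1 - α) / ((n:ℝ)+1)) *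
        ((1 / (n:ℝ)) * ∑ i ∈ Finset.Icc 1 n, g (X i ω) - ∫ x, g x ∂μ) := by
  haveI := hs.probP
  haveI := hs.probμ
  have hle := srrwFiltration_le hs.meas n
  set c : ℝ := 1 / ((n:ℝ)+1) with hcdef
  set M : ℝ := ∫ x, g x ∂μ with hMdef
  set F : Ω → ℝ := fun ω => ∑ i ∈ Finset.Icc 1 n, g (X i ω) with hFdef
  set G : Ω → ℝ := fun ω => g (X (n+1) ω) with hGdef
  have hFsm : StronglyMeasurable[(srrwFiltration X n)] F := by
    apply Measurable.stronglyMeasurable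
    exact Finset.measurable_sum _ fun i hi => hgm.measurable.comp (measurable_X_filtration hi)
  have hFint : Integrable F P := integrable_finset_sum _
    (fun i hi => srrw_integrable_comp hs hgm hgi (Finset.mem_Icc.mp hi).1)
  have hGint : Integrable G P := srrw_integrable_comp hs hgm hgi (by omega)
  have hfun : (fun ω => (1 / ((n:ℝ)+1)) * ∑ i ∈ Finset.Icc 1 (n+1), g (X i ω) - M)
      = (fun ω => c * F ω) + ((fun ω => c * G ω) + fun _ => -M) := by
    funext ω
    have hsplit := Finset.sum_Icc_succ_top (a := 1) (b := n) (by omega)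
      (fun i => g (X i ω))
    simp only [Pi.add_apply, hsplit, hFdef, hGdef, hcdef]
    ring
  rw [hfun]
  have h1 := condExp_add (μ := P) (m := (srrwFiltration X n)) (hFint.const_mul c)
    ((hGint.const_mul c).add (integrable_const (-M)))
  refine h1.trans ?_
  have h2 := condExp_add (μ := P) (m := (srrwFiltration X n)) (hGint.const_mul c) (integrable_const (-M))
  have hcF : P[(fun ω => c * F ω)|(srrwFiltration X n)] = fun ω => c * F ω :=
    condExp_of_stronglyMeasurable hle (hFsm.const_mul c) (hFint.const_mul c)
  have hconst : P[(fun _ : Ω => -M)|(srrwFiltration X n)] = fun _ => -M := condExp_const hle (-M)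
  have h5 := srrw_condexp_comp hs hgm hgi hn
  have h6 := condexp_const_mul' (m := (srrwFiltration X n)) (P := P) c G
  rw [hcF]
  refine (EventuallyEq.add (EventuallyEq.refl _ _) h2).trans ?_
  rw [hconst]
  refine (EventuallyEq.add (EventuallyEq.refl _ _)
    (EventuallyEq.add h6 (EventuallyEq.refl _ _))).trans ?_
  have hn0 : (n : ℝ) ≠ 0 := Nat.cast_ne_zero.mpr (by omega)
  have hn1 : (n : ℝ) + 1 ≠ 0 := by positivity
  filter_upwards [h5] with ω h5ω
  simp only [hGdef, Pi.add_apply]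
  rw [h5ω]
  simp only [hcdef, hFdef, hMdef]
  field_simp
  ring

end Aux

theorem stmt8 {Ω : Type*} [MeasurableSpace Ω] {d : ℕ}
    (P : Measure Ω) (α : ℝ) (μ : Measure (EuclideanSpace ℝ (Fin d)))
    (X : ℕ → Ω → EuclideanSpace ℝ (Fin d))
    (hsrrw : IsSRRW P α μ X)
    (hmom : Integrable (fun x => ‖x‖) μ)
    (h : EuclideanSpace ℝ (Fin d) → ℝ) (hh : Integrable h μ)
    (β : ℕ → ℝ)
    (hβ : ∀ n : ℕ, β n = ∏ k ∈ Finset.Ico 1 n, (1 - (1 - α) / ((k : ℝ) + 1))) :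
    ∀ n k : ℕ, 1 ≤ k → k < n →
      (P[(fun ω => (1 / (n:ℝ)) * ∑ i ∈ Finset.Icc 1 n, h (X i ω) - ∫ x, h x ∂μ)
          | srrwFiltration X k])
        =ᵐ[P] fun ω =>
          (β n / β k) *
            ((1 / (k:ℝ)) * ∑ i ∈ Finset.Icc 1 k, h (X i ω) - ∫ x, h x ∂μ) := by
  haveI := hsrrw.probP
  haveI := hsrrw.probμ
  obtain ⟨g, hgm, hhg⟩ : ∃ g, StronglyMeasurable g ∧ h =ᵐ[μ] g :=
    ⟨hh.1.mk h, hh.1.stronglyMeasurable_mk, hh.1.ae_eq_mk⟩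
  have hgi : Integrable g μ := hh.congr hhg
  have hM : ∫ x, h x ∂μ = ∫ x, g x ∂μ := integral_congr_ae hhg
  have hae : ∀ᵐ ω ∂P, ∀ i, 1 ≤ i → h (X i ω) = g (X i ω) := by
    rw [ae_all_iff]
    intro i
    rcases Nat.lt_or_ge i 1 with hi | hi
    · exact Filter.Eventually.of_forall fun ω h1 => absurd h1 (by omega)
    · have h1 : ∀ᵐ y ∂(P.map (X i)), h y = g y := by
        rw [srrw_law hsrrw i hi]; exact hhg
      exact (ae_of_ae_map (hsrrw.meas i).aemeasurable h1).mono fun ω hω _ => hω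
  have hβsucc : ∀ n : ℕ, 1 ≤ n → β (n+1) = β n * (1 - (1 - α) / ((n:ℝ) + 1)) := by
    intro n hn
    rw [hβ, hβ, Finset.prod_Ico_succ_top (a := 1) (b := n) hn]
  have hβpos : ∀ k : ℕ, 0 < β k := by
    intro k
    rw [hβ k]
    apply Finset.prod_pos
    intro j hj
    have hj1 : 1 ≤ j := (Finset.mem_Ico.mp hj).1
    have hid : 1 - (1 - α) / ((j:ℝ) + 1) = ((j:ℝ) + α) / ((j:ℝ) + 1) := by
      have : ((j:ℝ) + 1) ≠ 0 := by positivity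
      field_simp
      ring
    rw [hid]
    apply div_pos
    · have : (1:ℝ) ≤ (j:ℝ) := by exact_mod_cast hj1
      linarith [hsrrw.alpha_nonneg]
    · positivity
  -- the main claim for the strongly measurable version g
  have main : ∀ n k : ℕ, 1 ≤ k → k < n →
      (P[(fun ω => (1 / (n:ℝ)) * ∑ i ∈ Finset.Icc 1 n, g (X i ω) - ∫ x, g x ∂μ)
          | srrwFiltration X k])
        =ᵐ[P] fun ω =>
          (β n / β k) * ((1 / (k:ℝ)) * ∑ i ∈ Finset.Icc 1 k, g (X i ω) - ∫ x, g x ∂μ) := by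
    intro n
    induction n with
    | zero => intro k h1 h2; omega
    | succ n ih =>
      intro k hk hkn
      rcases Nat.lt_or_ge k n with hkn' | hkn'
      · -- k < n : tower property
        have hn1 : 1 ≤ n := by omega
        have step := srrw_condexp_delta hsrrw hgm hgi hn1
        have tower := (condExp_condExp_of_le (μ := P)
          (f := fun ω => (1 / ((n:ℝ)+1)) * ∑ i ∈ Finset.Icc 1 (n+1), g (X i ω) - ∫ x, g x ∂μ)
          (srrwFiltration_mono (by omega : k ≤ n)) (srrwFiltration_le hsrrw.meas n)).symm
      -- note : ((n:ℝ)+1) = ((n+1 : ℕ) : ℝ)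
        have hcast : ((n+1 : ℕ) : ℝ) = (n:ℝ) + 1 := by push_cast; ring
        rw [show (fun ω => (1 / ((n+1 : ℕ):ℝ)) * ∑ i ∈ Finset.Icc 1 (n+1), g (X i ω)
              - ∫ x, g x ∂μ)
            = (fun ω => (1 / ((n:ℝ)+1)) * ∑ i ∈ Finset.Icc 1 (n+1), g (X i ω) - ∫ x, g x ∂μ)
          from by funext ω; push_cast; ring]
        refine tower.trans ?_
        refine (condExp_congr_ae step).trans ?_
        refine ((condexp_const_mul' (m := srrwFiltration X k) (P := P)
          (1 - (1 - α) / ((n:ℝ)+1)) _).trans ?_)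
        have ihnk := ih k hk hkn'
        filter_upwards [ihnk] with ω hω
        rw [hω, hβsucc n hn1]
        have hβk : β k ≠ 0 := (hβpos k).ne'
        field_simp
      · -- k = n : single step
        have hkn'' : k = n := by omega
        subst hkn''
        have step := srrw_condexp_delta hsrrw hgm hgi hk
        have hcast : ((k+1 : ℕ) : ℝ) = (k:ℝ) + 1 := by push_cast; ring
        rw [show (fun ω => (1 / ((k+1 : ℕ):ℝ)) * ∑ i ∈ Finset.Icc 1 (k+1), g (X i ω)
              - ∫ x, g x ∂μ)
            = (fun ω => (1 / ((k:ℝ)+1)) * ∑ i ∈ Finset.Icc 1 (k+1), g (X i ω) - ∫ x, g x ∂μ)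
          from by funext ω; push_cast; ring]
        refine step.trans (Filter.Eventually.of_forall fun ω => ?_)
        rw [hβsucc k hk]
        have hβk : β k ≠ 0 := (hβpos k).ne'
        field_simp
        try ring
  intro n k hk hkn
  have hDh : (fun ω => (1 / (n:ℝ)) * ∑ i ∈ Finset.Icc 1 n, h (X i ω) - ∫ x, h x ∂μ)
      =ᵐ[P] (fun ω => (1 / (n:ℝ)) * ∑ i ∈ Finset.Icc 1 n, g (X i ω) - ∫ x, g x ∂μ) := by
    filter_upwards [hae] with ω hω
    rw [hM]
    congr 1
    congr 1
    exact Finset.sum_congr rfl fun i hi => hω i (Finset.mem_Icc.mp hi).1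
  refine (condExp_congr_ae hDh).trans ((main n k hk hkn).trans ?_)
  filter_upwards [hae] with ω hω
  rw [hM]
  have hsum : ∑ i ∈ Finset.Icc 1 k, h (X i ω) = ∑ i ∈ Finset.Icc 1 k, g (X i ω) :=
    Finset.sum_congr rfl fun i hi => hω i (Finset.mem_Icc.mp hi).1
  rw [hsum]

end
end
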